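/- arXiv:1101.0612 — 2 statements merged into one kernel-verified Lean document; each statement's English description precedes it below -/
import Mathlib

section
/- Let π be a binary cubic form with disc(π) > 0, so that π = λ(x − r₁y)(x − r₂y)(x − r₃y) with real roots r₁ < r₂ < r₃ and λ ≠ 0. Then the linear change of variables φ with matrix λ(2·disc π)^{−1/3} · [[r₁(r₂+r₃) − 2r₂r₃, √3·r₁(r₂−r₃)], [2r₁ − (r₂+r₃), √3·(r₂−r₃)]] satisfies π∘φ(x,y) = x(x² − 3y²). -/
/-- the discriminant of the binary cubic form ax³ + bx²y + cxy² + dy³ -/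
def disc3 (a b c d : ℝ) : ℝ :=
  b ^ 2 * c ^ 2 - 4 * a * c ^ 3 - 4 * b ^ 3 * d + 18 * a * b * c * d - 27 * a ^ 2 * d ^ 2

/-- discriminant of λ(x − r₁y)(x − r₂y)(x − r₃y), via its coefficients -/
def discRoots (l r1 r2 r3 : ℝ) : ℝ :=
  disc3 l (-l * (r1 + r2 + r3)) (l * (r1 * r2 + r2 * r3 + r3 * r1)) (-(l * (r1 * r2 * r3)))

/-- the scaling factor λ(2·disc π)^{-1/3} -/
noncomputable def scale3 (l r1 r2 r3 : ℝ) : ℝ :=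
  l * (2 * discRoots l r1 r2 r3) ^ (-(1 : ℝ) / 3)

/-- first component of the linear change of variables φ applied to (x,y) -/
noncomputable def phiX (l r1 r2 r3 x y : ℝ) : ℝ :=
  scale3 l r1 r2 r3 * (r1 * (r2 + r3) - 2 * r2 * r3) * x
    + scale3 l r1 r2 r3 * (Real.sqrt 3 * r1 * (r2 - r3)) * y

/-- second component of the linear change of variables φ applied to (x,y) -/
noncomputable def phiY (l r1 r2 r3 x y : ℝ) : ℝ :=
  scale3 l r1 r2 r3 * (2 * r1 - (r2 + r3)) * x
    + scale3 l r1 r2 r3 * (Real.sqrt 3 * (r2 - r3)) * y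

/-- for a binary cubic π = λ(x − r₁y)(x − r₂y)(x − r₃y) with real roots
r₁ < r₂ < r₃, λ ≠ 0 and disc(π) > 0, the explicit linear change of variables φ with matrix
λ(2·disc π)^{−1/3}·[[r₁(r₂+r₃) − 2r₂r₃, √3·r₁(r₂−r₃)], [2r₁ − (r₂+r₃), √3·(r₂−r₃)]]
satisfies π∘φ(x,y) = x(x² − 3y²). -/
theorem stmt3 (l r1 r2 r3 : ℝ) (hl : l ≠ 0) (h12 : r1 < r2) (h23 : r2 < r3)
    (hD : 0 < discRoots l r1 r2 r3) :
    ∀ x y : ℝ,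
      l * (phiX l r1 r2 r3 x y - r1 * phiY l r1 r2 r3 x y)
        * (phiX l r1 r2 r3 x y - r2 * phiY l r1 r2 r3 x y)
        * (phiX l r1 r2 r3 x y - r3 * phiY l r1 r2 r3 x y)
      = x * (x ^ 2 - 3 * y ^ 2) := by
  intro x y
  have ht2 : Real.sqrt 3 ^ 2 = 3 := Real.sq_sqrt (by norm_num)
  have hDval : discRoots l r1 r2 r3
      = l ^ 4 * ((r1 - r2) * (r2 - r3) * (r3 - r1)) ^ 2 := by
    simp only [discRoots, disc3]; ring
  have h2D : (0:ℝ) < 2 * discRoots l r1 r2 r3 := by linarith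
  have hc : (scale3 l r1 r2 r3) ^ 3 * (2 * discRoots l r1 r2 r3) = l ^ 3 := by
    rw [scale3, mul_pow,
      ← Real.rpow_natCast ((2 * discRoots l r1 r2 r3) ^ (-(1:ℝ) / 3)) 3,
      ← Real.rpow_mul h2D.le]
    norm_num
    rw [Real.rpow_neg_one]
    field_simp
  have key : (scale3 l r1 r2 r3) ^ 3
      * (2 * (l ^ 4 * ((r1 - r2) * (r2 - r3) * (r3 - r1)) ^ 2)) = l ^ 3 := by
    rw [← hDval]; exact hc
  have hl3 : (l:ℝ) ^ 3 ≠ 0 := pow_ne_zero _ hl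
  have main : l ^ 3 * (l * (phiX l r1 r2 r3 x y - r1 * phiY l r1 r2 r3 x y)
        * (phiX l r1 r2 r3 x y - r2 * phiY l r1 r2 r3 x y)
        * (phiX l r1 r2 r3 x y - r3 * phiY l r1 r2 r3 x y))
      = l ^ 3 * (x * (x ^ 2 - 3 * y ^ 2)) := by
    simp only [phiX, phiY]
    linear_combination (x * (x ^ 2 - Real.sqrt 3 ^ 2 * y ^ 2)) * key
      + (-(l ^ 3 * x * y ^ 2)) * ht2
  exact mul_left_cancel₀ hl3 main
end

section
/- For every binary cubic form π with disc(π) ≠ 0, there exists an invertible real linear change of variables φ such that π∘φ(x,y) = x(x² − 3y²) if disc(π) > 0, and π∘φ(x,y) = x(x² + 3y²) if disc(π) < 0. -/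
/-- evaluation of the binary cubic form ax³ + bx²y + cxy² + dy³ -/
def cubic (a b c d x y : ℝ) : ℝ :=
  a * x ^ 3 + b * x ^ 2 * y + c * x * y ^ 2 + d * y ^ 3

/-! A real binary cubic has a real linear factor, having odd degree. Moving that factor to `x`
turns the form into `x (a x² + b x y + c y²)`, whose discriminant `c² (b² - 4ac)` is nonzero,
so `c ≠ 0` and completing the square gives `x (e x² + c y²)`, of discriminant `-4 e c³`.
Rescaling `x` by a cube root and `y` by a square root then yields `x (x² ± 3 y²)`. A change of
variables multiplies the discriminant by `det⁶ > 0`, so its sign decides which sign occurs. -/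

theorem exists_monic_cubic_root (b c d : ℝ) : ∃ t : ℝ, t ^ 3 + b * t ^ 2 + c * t + d = 0 := by
  set M := 1 + |b| + |c| + |d|
  have hM : 1 ≤ M := by simp only [M]; linarith [abs_nonneg b, abs_nonneg c, abs_nonneg d]
  have hcont : Continuous fun t : ℝ => t ^ 3 + b * t ^ 2 + c * t + d := by fun_prop
  obtain ⟨t, ht⟩ := intermediate_value_univ (-M) M hcont (show (0 : ℝ) ∈ Set.Icc _ _ from by
    constructor <;>
      nlinarith [neg_abs_le b, le_abs_self b, neg_abs_le c, le_abs_self c, neg_abs_le d,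
        le_abs_self d, abs_nonneg b, mul_le_mul_of_nonneg_left hM (abs_nonneg c),
        mul_le_mul_of_nonneg_left hM (abs_nonneg d), sq_nonneg M])
  exact ⟨t, ht⟩

theorem exists_pow_three_eq (v : ℝ) : ∃ u : ℝ, u ^ 3 = v := by
  obtain ⟨u, hu⟩ := exists_monic_cubic_root 0 0 (-v)
  exact ⟨u, by linear_combination hu⟩

theorem exists_cubic_eq_zero (a b c d : ℝ) :
    ∃ x y : ℝ, (x, y) ≠ (0, 0) ∧ cubic a b c d x y = 0 := by
  rcases eq_or_ne a 0 with rfl | ha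
  · exact ⟨1, 0, by simp, by simp [cubic]⟩
  obtain ⟨t, ht⟩ := exists_monic_cubic_root (b / a) (c / a) (d / a)
  refine ⟨t, 1, by simp, ?_⟩
  simp only [cubic]
  field_simp at ht
  linear_combination ht

theorem cubic_coeffs_eq {a b c d a' b' c' d' : ℝ}
    (h : ∀ x y, cubic a b c d x y = cubic a' b' c' d' x y) :
    a = a' ∧ b = b' ∧ c = c' ∧ d = d' := by
  have h₁ := h 1 0
  have h₂ := h 0 1
  have h₃ := h 1 1
  have h₄ := h 1 (-1)
  simp only [cubic] at h₁ h₂ h₃ h₄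
  exact ⟨by linarith, by linarith, by linarith, by linarith⟩

theorem cubic_linear_subst (a b c d p q r s x y : ℝ) :
    cubic a b c d (p * x + q * y) (r * x + s * y) =
      cubic (cubic a b c d p r)
        (3 * a * p ^ 2 * q + b * (p ^ 2 * s + 2 * p * q * r) + c * (2 * p * r * s + q * r ^ 2)
          + 3 * d * r ^ 2 * s)
        (3 * a * p * q ^ 2 + b * (2 * p * q * s + q ^ 2 * r) + c * (p * s ^ 2 + 2 * q * r * s)
          + 3 * d * r * s ^ 2)
        (cubic a b c d q s) x y := by
  simp only [cubic]; ring

def CubicEquiv (a b c d a' b' c' d' : ℝ) : Prop :=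
  ∃ φ : Matrix (Fin 2) (Fin 2) ℝ, φ.det ≠ 0 ∧ ∀ x y : ℝ,
    cubic a b c d (φ 0 0 * x + φ 0 1 * y) (φ 1 0 * x + φ 1 1 * y) = cubic a' b' c' d' x y

namespace CubicEquiv

variable {a b c d a' b' c' d' a'' b'' c'' d'' k : ℝ}

theorem of_subst (p q r s : ℝ) (hdet : p * s - q * r ≠ 0)
    (h : ∀ x y, cubic a b c d (p * x + q * y) (r * x + s * y) = cubic a' b' c' d' x y) :
    CubicEquiv a b c d a' b' c' d' :=
  ⟨!![p, q; r, s], by rwa [Matrix.det_fin_two_of], by simpa using h⟩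

theorem trans (h₁ : CubicEquiv a b c d a' b' c' d') (h₂ : CubicEquiv a' b' c' d' a'' b'' c'' d'') :
    CubicEquiv a b c d a'' b'' c'' d'' := by
  obtain ⟨φ, hφ, h₁⟩ := h₁
  obtain ⟨ψ, hψ, h₂⟩ := h₂
  refine ⟨φ * ψ, by rw [Matrix.det_mul]; exact mul_ne_zero hφ hψ, fun x y => ?_⟩
  rw [← h₂, ← h₁]
  simp only [Matrix.mul_apply, Fin.sum_univ_two]
  congr 1 <;> ring

theorem disc3_eq (h : CubicEquiv a b c d a' b' c' d') :
    ∃ k > 0, disc3 a' b' c' d' = k * disc3 a b c d := by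
  obtain ⟨φ, hdet, h⟩ := h
  obtain ⟨rfl, rfl, rfl, rfl⟩ :=
    cubic_coeffs_eq fun x y => (cubic_linear_subst ..).symm.trans (h x y)
  refine ⟨φ.det ^ 6, Even.pow_pos (by decide) hdet, ?_⟩
  rw [Matrix.det_fin_two]
  simp only [disc3, cubic]
  ring

theorem exists_d_eq_zero (a b c d : ℝ) : ∃ a' b' c', CubicEquiv a b c d a' b' c' 0 := by
  obtain ⟨x₀, y₀, hne, h₀⟩ := exists_cubic_eq_zero a b c d
  have hdet : y₀ * y₀ - x₀ * -x₀ ≠ 0 := by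
    intro h
    apply hne
    simp only [Prod.mk.injEq]
    constructor <;> nlinarith [sq_nonneg x₀, sq_nonneg y₀]
  -- the second column of the substitution is the zero `(x₀, y₀)`, which kills the new `y³` term
  exact ⟨_, _, _, of_subst y₀ x₀ (-x₀) y₀ hdet fun x y => by rw [cubic_linear_subst, h₀]⟩

theorem shear (hc : c ≠ 0) : CubicEquiv a b c 0 (a - b ^ 2 / (4 * c)) 0 c 0 :=
  of_subst 1 0 (-b / (2 * c)) 1 (by norm_num) fun x y => by
    simp only [cubic]; field_simp; ring

theorem scale (ha : a ≠ 0) (h : 0 < a * c * k) : CubicEquiv a 0 c 0 1 0 k 0 := by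
  obtain ⟨v, hv⟩ := exists_pow_three_eq a⁻¹
  have hav : a * v ^ 3 = 1 := by rw [hv, mul_inv_cancel₀ ha]
  have hv₀ : v ≠ 0 := by rintro rfl; simp at hav
  have hav₀ : 0 < a * v := by nlinarith [sq_nonneg v]
  have hpos : 0 < k / (c * v) := by
    have : 0 < k * (c * v) * a ^ 2 := by linear_combination mul_pos h hav₀
    exact div_pos_iff.2 (mul_pos_iff.1 (pos_of_mul_pos_left this (sq_nonneg a)))
  set μ := √(k / (c * v))
  have hμ : μ ^ 2 = k / (c * v) := Real.sq_sqrt hpos.le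
  have hμ₀ : μ ≠ 0 := Real.sqrt_ne_zero'.2 hpos
  refine of_subst v 0 0 μ (by simpa using mul_ne_zero hv₀ hμ₀) fun x y => ?_
  simp only [cubic]
  have hc : c ≠ 0 := by rintro rfl; simp at h
  have hcvμ : c * v * μ ^ 2 = k := by rw [hμ]; field_simp
  linear_combination x ^ 3 * hav + x * y ^ 2 * hcvμ

theorem normal_form (hk : 0 < k * disc3 a b c d) : CubicEquiv a b c d 1 0 (-k) 0 := by
  obtain ⟨a', b', c', h₀⟩ := exists_d_eq_zero a b c d
  obtain ⟨m, hm, hdisc⟩ := h₀.disc3_eq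
  have hk' : 0 < k * disc3 a' b' c' 0 := by rw [hdisc, mul_left_comm]; exact mul_pos hm hk
  have hc' : c' ≠ 0 := by rintro rfl; simp [disc3] at hk'
  set e := a' - b' ^ 2 / (4 * c')
  have hdisc' : k * disc3 a' b' c' 0 = 4 * c' ^ 2 * (e * c' * -k) := by
    simp only [e, disc3]; field_simp; ring
  have hek : 0 < e * c' * -k := pos_of_mul_pos_right (hdisc' ▸ hk') (by positivity)
  have he : e ≠ 0 := by rintro h; simp [h] at hek
  exact h₀.trans ((shear hc').trans (scale he hek))

end CubicEquiv

/-- every binary cubic form with nonzero discriminant is equivalent, under an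
invertible real linear change of variables, to x(x² − 3y²) if disc > 0 and to x(x² + 3y²)
if disc < 0. -/
theorem stmt4 (a b c d : ℝ) (h : disc3 a b c d ≠ 0) :
    ∃ φ : Matrix (Fin 2) (Fin 2) ℝ, φ.det ≠ 0 ∧
      ((0 < disc3 a b c d → ∀ x y : ℝ,
          cubic a b c d (φ 0 0 * x + φ 0 1 * y) (φ 1 0 * x + φ 1 1 * y)
            = x * (x ^ 2 - 3 * y ^ 2)) ∧
       (disc3 a b c d < 0 → ∀ x y : ℝ,
          cubic a b c d (φ 0 0 * x + φ 0 1 * y) (φ 1 0 * x + φ 1 1 * y)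
            = x * (x ^ 2 + 3 * y ^ 2))) := by
  rcases h.lt_or_gt with hneg | hpos
  · obtain ⟨φ, hdet, hφ⟩ := CubicEquiv.normal_form (k := -3) (by linarith)
    refine ⟨φ, hdet, fun hpos' => absurd hneg hpos'.not_gt, fun _ x y => ?_⟩
    rw [hφ]; simp only [cubic]; ring
  · obtain ⟨φ, hdet, hφ⟩ := CubicEquiv.normal_form (k := 3) (by linarith)
    refine ⟨φ, hdet, fun _ x y => ?_, fun hneg' => absurd hneg' hpos.not_gt⟩
    rw [hφ]; simp only [cubic]; ring
end
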